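/- arXiv:1807.05082 — 3 statements merged into one kernel-verified Lean document; each statement's English description precedes it below -/
import Mathlib

section
/- (Entropy upper bound for the a priori covariance) Under the stated assumptions, the positive definite Riccati solution Σ satisfies ln det(Σ) ≤ tr(AᵀA)/m + tr(W). -/
/-!
Writing `P := Σ - Σ Cᵀ (C Σ Cᵀ + V)⁻¹ C Σ`, the Riccati equation reads `Σ = A P Aᵀ + W`, and the
Woodbury identity gives `P = (Σ⁻¹ + Cᵀ V⁻¹ C)⁻¹`. Since `Σ⁻¹ + Cᵀ V⁻¹ C ≥ m I` in the Loewner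
order, `P ≤ m⁻¹ I`, hence `tr Σ ≤ tr (AᵀA) / m + tr W`. Finally `ln det Σ ≤ tr Σ - n ≤ tr Σ`,
from `ln λ ≤ λ - 1` applied to the eigenvalues of `Σ`.
-/

open Matrix

open scoped MatrixOrder

namespace Matrix

variable {ι κ : Type*} [Fintype ι] [DecidableEq ι] [Fintype κ]

theorem PosDef.log_det_le_trace_sub_card {S : Matrix ι ι ℝ} (hS : S.PosDef) :
    Real.log S.det ≤ S.trace - Fintype.card ι := by
  have hpos := hS.eigenvalues_pos
  rw [hS.isHermitian.det_eq_prod_eigenvalues, hS.isHermitian.trace_eq_sum_eigenvalues]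
  simp only [RCLike.ofReal_real_eq_id, id]
  rw [Real.log_prod fun i _ => (hpos i).ne', Fintype.card_eq_sum_ones, Nat.cast_sum,
    Nat.cast_one, ← Finset.sum_sub_distrib]
  exact Finset.sum_le_sum fun i _ => Real.log_le_sub_one_of_pos (hpos i)

theorem inv_le_inv_smul_one_of_smul_one_le {X : Matrix ι ι ℝ} {m : ℝ} (hm : 0 < m)
    (h : m • 1 ≤ X) : X⁻¹ ≤ m⁻¹ • 1 := by
  set D := X - m • 1
  have hD : D.PosSemidef := le_iff.mp h
  have hX : X.PosDef := by
    simpa [D] using PosDef.posSemidef_add hD (PosDef.one.smul hm)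
  have hXX : X⁻¹ * X = 1 := nonsing_inv_mul _ ((isUnit_iff_isUnit_det _).mp hX.isUnit)
  have hXX' : X * X⁻¹ = 1 := mul_nonsing_inv _ ((isUnit_iff_isUnit_det _).mp hX.isUnit)
  -- `X (X - m) = (X - m)² + m (X - m)` is positive semidefinite, and so is its congruence by `X⁻¹`.
  have key : m⁻¹ • 1 - X⁻¹ = m⁻¹ • (X⁻¹ * (Dᴴ * D + m • D) * X⁻¹ᴴ) := by
    have hXD : Dᴴ * D + m • D = X * D := by
      rw [hD.isHermitian.eq]
      simp only [D]
      noncomm_ring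
    rw [hXD, hX.inv.isHermitian.eq, ← Matrix.mul_assoc, hXX, Matrix.one_mul]
    simp only [D, Matrix.sub_mul, hXX', Matrix.smul_mul, Matrix.one_mul, smul_sub, smul_smul,
      inv_mul_cancel₀ hm.ne', one_smul]
  rw [le_iff, key]
  exact (((posSemidef_conjTranspose_mul_self D).add (hD.smul hm.le)).mul_mul_conjTranspose_same
    X⁻¹).smul (inv_nonneg.mpr hm.le)

theorem trace_mul_mul_transpose_le {P : Matrix ι ι ℝ} {r : ℝ} (A : Matrix κ ι ℝ)
    (hP : P ≤ r • 1) : (A * P * Aᵀ).trace ≤ r * (Aᵀ * A).trace := by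
  have h := ((le_iff.mp hP).mul_mul_conjTranspose_same A).trace_nonneg
  rw [conjTranspose_eq_transpose_of_trivial, Matrix.mul_sub, Matrix.sub_mul, trace_sub,
    Matrix.mul_smul, Matrix.mul_one, Matrix.smul_mul, trace_smul, trace_mul_comm A,
    smul_eq_mul] at h
  linarith

theorem PosDef.sub_mul_inv_mul_eq_inv_add [DecidableEq κ] {S : Matrix ι ι ℝ} {V : Matrix κ κ ℝ}
    (C : Matrix κ ι ℝ) (hS : S.PosDef) (hV : V.PosDef) :
    S - S * Cᵀ * (C * S * Cᵀ + V)⁻¹ * C * S = (S⁻¹ + Cᵀ * V⁻¹ * C)⁻¹ := by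
  have hSS : S⁻¹⁻¹ = S := nonsing_inv_nonsing_inv _ ((isUnit_iff_isUnit_det _).mp hS.isUnit)
  have hVV : V⁻¹⁻¹ = V := nonsing_inv_nonsing_inv _ ((isUnit_iff_isUnit_det _).mp hV.isUnit)
  have hR : (V + C * S * Cᵀ).PosDef := by
    simpa [conjTranspose_eq_transpose_of_trivial] using
      hV.add_posSemidef (hS.posSemidef.mul_mul_conjTranspose_same C)
  rw [add_mul_mul_inv_eq_sub _ _ _ _ hS.inv.isUnit hV.inv.isUnit
    (by rw [hSS, hVV]; exact hR.isUnit), hSS, hVV, add_comm V]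

theorem trace_le_of_riccati [DecidableEq κ] {A W S : Matrix ι ι ℝ} {C : Matrix κ ι ℝ}
    {V : Matrix κ κ ℝ} {m : ℝ} (hS : S.PosDef) (hV : V.PosDef) (hm : 0 < m)
    (hCVC : m • 1 ≤ Cᵀ * V⁻¹ * C)
    (hric : S = A * S * Aᵀ - A * S * Cᵀ * (C * S * Cᵀ + V)⁻¹ * C * S * Aᵀ + W) :
    S.trace ≤ (Aᵀ * A).trace / m + W.trace := by
  have hSP : S = A * (S⁻¹ + Cᵀ * V⁻¹ * C)⁻¹ * Aᵀ + W := by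
    rw [← hS.sub_mul_inv_mul_eq_inv_add C hV]
    nth_rewrite 1 [hric]
    simp only [Matrix.mul_sub, Matrix.sub_mul, Matrix.mul_assoc]
  set P := (S⁻¹ + Cᵀ * V⁻¹ * C)⁻¹
  have hP : P ≤ m⁻¹ • 1 :=
    inv_le_inv_smul_one_of_smul_one_le hm
      (hCVC.trans (le_add_of_nonneg_left hS.inv.posSemidef.nonneg))
  calc S.trace = (A * P * Aᵀ).trace + W.trace := by rw [← trace_add, ← hSP]
    _ ≤ m⁻¹ * (Aᵀ * A).trace + W.trace := by gcongr; exact trace_mul_mul_transpose_le A hP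
    _ = (Aᵀ * A).trace / m + W.trace := by rw [inv_mul_eq_div]

omit [Fintype ι] in
theorem smul_one_le_diagonal {d : ι → ℝ} {m : ℝ} (h : ∀ i, m ≤ d i) :
    m • 1 ≤ diagonal d := by
  rw [le_iff, smul_one_eq_diagonal, diagonal_sub]
  exact posSemidef_diagonal_iff.mpr fun i => sub_nonneg.mpr (h i)

theorem transpose_diagonal_mul_inv_diagonal_mul_diagonal (c : ι → ℝ) {v : ι → ℝ}
    (hv : ∀ i, v i ≠ 0) :
    (diagonal c)ᵀ * (diagonal v)⁻¹ * diagonal c = diagonal fun i => c i ^ 2 / v i := by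
  have hinv : (diagonal v)⁻¹ = diagonal v⁻¹ := inv_eq_left_inv <| by
    rw [diagonal_mul_diagonal, ← diagonal_one]
    exact congrArg diagonal (funext fun i => inv_mul_cancel₀ (hv i))
  rw [diagonal_transpose, hinv, diagonal_mul_diagonal, diagonal_mul_diagonal]
  exact congrArg diagonal (funext fun i => by simp only [Pi.inv_apply]; ring)

end Matrix

theorem riccati_logdet_upper_general {n : ℕ} (hn : 1 ≤ n)
    (A W S : Matrix (Fin n) (Fin n) ℝ)
    (c σ : Fin n → ℝ) (hc : ∀ i, 0 < c i) (hσ : ∀ i, 0 < σ i)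
    (hS : S.PosDef)
    (hric : S = A * S * Aᵀ -
        A * S * (Matrix.diagonal c)ᵀ *
          (Matrix.diagonal c * S * (Matrix.diagonal c)ᵀ +
            Matrix.diagonal fun i => σ i ^ 2)⁻¹ *
          Matrix.diagonal c * S * Aᵀ + W) :
    Real.log S.det ≤ (Aᵀ * A).trace / (⨅ i, c i ^ 2 / σ i ^ 2) + W.trace := by
  have : Nonempty (Fin n) := Fin.pos_iff_nonempty.mp hn
  have hm : 0 < ⨅ i, c i ^ 2 / σ i ^ 2 := by
    obtain ⟨i, hi⟩ := exists_eq_ciInf_of_finite (f := fun i => c i ^ 2 / σ i ^ 2)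
    rw [← hi]
    exact div_pos (pow_pos (hc i) 2) (pow_pos (hσ i) 2)
  have hCVC : (⨅ i, c i ^ 2 / σ i ^ 2) • 1 ≤
      (diagonal c)ᵀ * (diagonal fun i => σ i ^ 2)⁻¹ * diagonal c := by
    rw [transpose_diagonal_mul_inv_diagonal_mul_diagonal c fun i => (pow_pos (hσ i) 2).ne']
    exact smul_one_le_diagonal fun i => ciInf_le (Finite.bddBelow_range _) i
  have hV : (diagonal fun i => σ i ^ 2).PosDef :=
    posDef_diagonal_iff.mpr fun i => pow_pos (hσ i) 2
  calc Real.log S.det ≤ S.trace - Fintype.card (Fin n) := hS.log_det_le_trace_sub_card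
    _ ≤ S.trace := sub_le_self _ (Nat.cast_nonneg _)
    _ ≤ (Aᵀ * A).trace / (⨅ i, c i ^ 2 / σ i ^ 2) + W.trace :=
      trace_le_of_riccati hS hV hm hCVC hric

/-- Entropy upper bound for the a priori covariance:
`ln det S ≤ tr(AᵀA)/m + tr W`, where `m = min_i c_i²/σ_i²`. -/
theorem riccati_logdet_upper {n : ℕ} (hn : 1 ≤ n)
    (A W S : Matrix (Fin n) (Fin n) ℝ)
    (c σ : Fin n → ℝ) (hc : ∀ i, 0 < c i) (hσ : ∀ i, 0 < σ i)
    (hW : W.PosDef) (hS : S.PosDef)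
    (hric : S = A * S * Aᵀ -
        A * S * (Matrix.diagonal c)ᵀ *
          (Matrix.diagonal c * S * (Matrix.diagonal c)ᵀ +
            Matrix.diagonal fun i => σ i ^ 2)⁻¹ *
          Matrix.diagonal c * S * Aᵀ + W) :
    Real.log S.det ≤ (Aᵀ * A).trace / (⨅ i, c i ^ 2 / σ i ^ 2) + W.trace :=
  riccati_logdet_upper_general hn A W S c σ hc hσ hS hric
end

section
/- (Privacy calibration for a priori prediction error) In addition to the stated filtering assumptions, suppose for each i that the privacy-noise standard deviation is σ_i = (Δ_i/(2ε_i))·(K_i + √(K_i² + 2ε_i)) with Δ_i > 0, ε_i > 0, and K_i ∈ [1, 4.5]. Let B_l, B_u be given with tr(W) < B_l < tr(W) + tr(AᵀA)·λ_min(W) and B_u > tr(W). Let u be an index maximizing c_i²/σ_i² and l an index minimizing c_i²/σ_i², and define for each i: η₁ᵢ := √( (B_l − tr(W))·λ_min(W)·c_u² / ( Δ_i²·( tr(AᵀA)·λ_min(W) − B_l + tr(W) ) ) ) and η₂ᵢ := √( (B_u − tr(W))·c_l² / ( Δ_i²·tr(AᵀA) ) ). If for every i, (1/8)·((1 + √(36η₂ᵢ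 + 1))/η₂ᵢ)² ≤ ε_i ≤ 1/η₁ᵢ, then B_l ≤ tr(Σ) ≤ B_u. -/
/-!
With `E = Cᵀ V⁻¹ C = diag (cᵢ² / σᵢ²)`, the Woodbury identity turns the Riccati equation into
`Σ = A (Σ⁻¹ + E)⁻¹ Aᵀ + W`, so `tr Σ - tr W = tr (A (Σ⁻¹ + E)⁻¹ Aᵀ)`. In the Loewner order
`(c_l² / σ_l²) I ≤ E ≤ (c_u² / σ_u²) I` and `λ_min(W) I ≤ W ≤ Σ`, which sandwiches `(Σ⁻¹ + E)⁻¹`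
between two multiples of `I`, hence that trace between two multiples of `tr (AᵀA)`. The
calibration window for `εᵢ` makes `σ_l` small and `σ_u` large enough for these multiples to land
in `[B_l - tr W, B_u - tr W]`.
-/

open Matrix
open scoped MatrixOrder ComplexOrder

namespace Matrix

section Loewner

variable {𝕜 n : Type*} [RCLike 𝕜] [DecidableEq n]

theorem diagonal_le_diagonal_iff {d e : n → 𝕜} : diagonal d ≤ diagonal e ↔ d ≤ e := by
  rw [le_iff, diagonal_sub]
  refine ⟨fun h i => sub_nonneg.1 (by simpa using h.diag_nonneg (i := i)), fun h => ?_⟩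
  exact PosSemidef.diagonal fun i => sub_nonneg.2 (h i)

variable [Fintype n]

theorem inv_le_smul_one_of_smul_one_le {P : Matrix n n 𝕜} {a : ℝ} (ha : 0 < a)
    (h : a • (1 : Matrix n n 𝕜) ≤ P) : P⁻¹ ≤ a⁻¹ • (1 : Matrix n n 𝕜) := by
  have hP : P.PosDef := by
    simpa using (PosDef.one.smul ha).add_posSemidef (le_iff.mp h)
  lift P to (Matrix n n 𝕜)ˣ using hP.isUnit
  rw [← Algebra.algebraMap_eq_smul_one] at h ⊢
  rw [algebraMap_le_iff_le_spectrum hP.isHermitian] at h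
  rw [← coe_units_inv,
    le_algebraMap_iff_spectrum_le (by rw [coe_units_inv]; exact hP.inv.isHermitian)]
  intro x hx
  rw [← spectrum.inv₀_mem_iff] at hx
  simpa using inv_anti₀ ha (h _ hx)

theorem smul_one_le_inv_of_le_smul_one {P : Matrix n n 𝕜} (hP : P.PosDef) {a : ℝ}
    (h : P ≤ a • (1 : Matrix n n 𝕜)) : a⁻¹ • (1 : Matrix n n 𝕜) ≤ P⁻¹ := by
  lift P to (Matrix n n 𝕜)ˣ using hP.isUnit
  rw [← Algebra.algebraMap_eq_smul_one] at h ⊢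
  rw [le_algebraMap_iff_spectrum_le hP.isHermitian] at h
  rw [← coe_units_inv,
    algebraMap_le_iff_le_spectrum (by rw [coe_units_inv]; exact hP.inv.isHermitian)]
  intro x hx
  rw [← spectrum.inv₀_mem_iff] at hx
  have hpos : 0 < x⁻¹ := (isStrictlyPositive_iff_posDef.mpr hP).spectrum_pos hx
  simpa using inv_anti₀ hpos (h _ hx)

theorem IsHermitian.iInf_eigenvalues_smul_one_le {W : Matrix n n 𝕜} (hW : W.IsHermitian) :
    (⨅ i, hW.eigenvalues i) • (1 : Matrix n n 𝕜) ≤ W := by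
  rw [← Algebra.algebraMap_eq_smul_one, algebraMap_le_iff_le_spectrum hW,
    hW.spectrum_real_eq_range_eigenvalues]
  rintro _ ⟨i, rfl⟩
  exact ciInf_le (Set.finite_range _).bddBelow i

end Loewner

section Trace

variable {m n : Type*} [Fintype m] [Fintype n]

theorem PosSemidef.mul_mul_transpose_same {X : Matrix n n ℝ} (hX : X.PosSemidef)
    (A : Matrix m n ℝ) : (A * X * Aᵀ).PosSemidef := by
  simpa only [conjTranspose_eq_transpose_of_trivial] using hX.mul_mul_conjTranspose_same A

theorem monotone_trace_mul_mul_transpose (A : Matrix m n ℝ) :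
    Monotone fun X : Matrix n n ℝ => (A * X * Aᵀ).trace := by
  intro X Y h
  have := ((le_iff.mp h).mul_mul_transpose_same A).trace_nonneg
  rw [Matrix.mul_sub, Matrix.sub_mul, trace_sub] at this
  exact sub_nonneg.1 this

variable [DecidableEq n]

theorem trace_mul_smul_one_mul_transpose (A : Matrix m n ℝ) (a : ℝ) :
    (A * (a • (1 : Matrix n n ℝ)) * Aᵀ).trace = a * (Aᵀ * A).trace := by
  rw [Matrix.mul_smul, Matrix.mul_one, Matrix.smul_mul, trace_smul, smul_eq_mul, trace_mul_comm]

theorem trace_mul_inv_inv_add_mul_transpose_le (A : Matrix m n ℝ) {S E : Matrix n n ℝ}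
    (hS : S.PosDef) {r : ℝ} (hr : 0 < r) (hE : r • 1 ≤ E) :
    (A * (S⁻¹ + E)⁻¹ * Aᵀ).trace ≤ r⁻¹ * (Aᵀ * A).trace := by
  rw [← trace_mul_smul_one_mul_transpose]
  apply monotone_trace_mul_mul_transpose A
  exact inv_le_smul_one_of_smul_one_le hr
    (hE.trans (le_add_of_nonneg_left hS.inv.posSemidef.nonneg))

theorem le_trace_mul_inv_inv_add_mul_transpose (A : Matrix m n ℝ) {S E : Matrix n n ℝ}
    (hS : S.PosDef) (hE : E.PosSemidef) {l s : ℝ} (hl : 0 < l) (hSl : l • 1 ≤ S)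
    (hEs : E ≤ s • 1) :
    (l⁻¹ + s)⁻¹ * (Aᵀ * A).trace ≤ (A * (S⁻¹ + E)⁻¹ * Aᵀ).trace := by
  rw [← trace_mul_smul_one_mul_transpose]
  apply monotone_trace_mul_mul_transpose A
  apply smul_one_le_inv_of_le_smul_one (hS.inv.add_posSemidef hE)
  rw [add_smul]
  exact add_le_add (inv_le_smul_one_of_smul_one_le hl hSl) hEs

end Trace

variable {m n : Type*} [Fintype m] [DecidableEq m] [Fintype n] [DecidableEq n]

theorem inv_add_transpose_mul_inv_mul {α : Type*} [CommRing α] {S : Matrix n n α}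
    {V : Matrix m m α} (C : Matrix m n α) (hS : IsUnit S) (hV : IsUnit V)
    (h : IsUnit (C * S * Cᵀ + V)) :
    (S⁻¹ + Cᵀ * V⁻¹ * C)⁻¹ = S - S * Cᵀ * (C * S * Cᵀ + V)⁻¹ * C * S := by
  have hS' : S⁻¹⁻¹ = S := nonsing_inv_nonsing_inv S ((isUnit_iff_isUnit_det S).mp hS)
  have hV' : V⁻¹⁻¹ = V := nonsing_inv_nonsing_inv V ((isUnit_iff_isUnit_det V).mp hV)
  rw [add_mul_mul_inv_eq_sub _ _ _ _ (isUnit_nonsing_inv_iff.2 hS) (isUnit_nonsing_inv_iff.2 hV)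
    (by rwa [hS', hV', add_comm]), hS', hV', add_comm V]

theorem diagonal_transpose_mul_inv_diagonal_mul {K : Type*} [Field K] (c : n → K) {v : n → K}
    (hv : ∀ i, v i ≠ 0) :
    (diagonal c)ᵀ * (diagonal v)⁻¹ * diagonal c = diagonal fun i => c i ^ 2 / v i := by
  have hinv : (diagonal v)⁻¹ = diagonal v⁻¹ :=
    inv_eq_right_inv (by simp [diagonal_mul_diagonal, hv])
  rw [diagonal_transpose, hinv, diagonal_mul_diagonal, diagonal_mul_diagonal]
  congr 1
  ext i
  simp only [Pi.inv_apply]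
  ring

end Matrix

theorem information_form_of_riccati {m n : Type*} [Fintype m] [DecidableEq m] [Fintype n]
    [DecidableEq n] {A S W : Matrix n n ℝ} {C : Matrix m n ℝ} {V : Matrix m m ℝ}
    (hS : S.PosDef) (hV : V.PosDef)
    (hric : S = A * S * Aᵀ - A * S * Cᵀ * (C * S * Cᵀ + V)⁻¹ * C * S * Aᵀ + W) :
    S = A * (S⁻¹ + Cᵀ * V⁻¹ * C)⁻¹ * Aᵀ + W := by
  rw [inv_add_transpose_mul_inv_mul C hS.isUnit hV.isUnit
    ((hV.posSemidef_add (hS.posSemidef.mul_mul_transpose_same C)).isUnit)]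
  conv_lhs => rw [hric]
  simp only [Matrix.mul_sub, Matrix.sub_mul, Matrix.mul_assoc]

noncomputable def gaussianNoiseStd (Δ ε K : ℝ) : ℝ := Δ / (2 * ε) * (K + √(K ^ 2 + 2 * ε))

theorem div_le_gaussianNoiseStd {Δ ε K : ℝ} (hΔ : 0 ≤ Δ) (hε : 0 < ε) (hK : 1 ≤ K) :
    Δ / ε ≤ gaussianNoiseStd Δ ε K := by
  have hsqrt : K ≤ √(K ^ 2 + 2 * ε) := Real.le_sqrt_of_sq_le (by linarith)
  calc Δ / ε = Δ / (2 * ε) * 2 := by field_simp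
    _ ≤ gaussianNoiseStd Δ ε K := mul_le_mul_of_nonneg_left (by linarith) (by positivity)

theorem gaussianNoiseStd_le {Δ ε K η : ℝ} (hΔ : 0 ≤ Δ) (hε : 0 < ε) (hK0 : 0 ≤ K)
    (hK : K ≤ 4.5) (hη : 0 < η) (hcal : 1 / 8 * ((1 + √(36 * η + 1)) / η) ^ 2 ≤ ε) :
    gaussianNoiseStd Δ ε K ≤ Δ * η := by
  set t := √(2 * ε)
  have ht : t ^ 2 = 2 * ε := Real.sq_sqrt (by positivity)
  have ht0 : 0 < t := Real.sqrt_pos.2 (by positivity)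
  set s := √(36 * η + 1)
  have hs : s ^ 2 = 36 * η + 1 := Real.sq_sqrt (by positivity)
  have hs0 : 0 ≤ s := Real.sqrt_nonneg _
  have h1 : 1 + s ≤ 2 * η * t := by
    have : ((1 + s) / (2 * η)) ^ 2 ≤ t ^ 2 := by
      rw [ht, div_pow]
      calc (1 + s) ^ 2 / (2 * η) ^ 2 = 2 * (1 / 8 * ((1 + s) / η) ^ 2) := by ring
        _ ≤ 2 * ε := by linarith
    rw [pow_le_pow_iff_left₀ (by positivity) ht0.le two_ne_zero, div_le_iff₀ (by positivity)]
      at this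
    linarith
  -- squaring `s ≤ 2ηt - 1` gives `ηt² ≥ t + 9`, and `9 ≥ 2K` is where `K ≤ 4.5` enters
  have h2 : t + 9 ≤ η * t ^ 2 := by nlinarith
  have h3 : √(K ^ 2 + 2 * ε) ≤ K + t := Real.sqrt_le_iff.2 ⟨by positivity, by nlinarith⟩
  have key : K + √(K ^ 2 + 2 * ε) ≤ 2 * ε * η := by nlinarith
  calc gaussianNoiseStd Δ ε K ≤ Δ / (2 * ε) * (2 * ε * η) :=
        mul_le_mul_of_nonneg_left key (by positivity)
    _ = Δ * η := by field_simp

theorem mul_sqrt_div_sq_mul {Δ : ℝ} (hΔ : 0 < Δ) (x y : ℝ) :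
    Δ * √(x / (Δ ^ 2 * y)) = √(x / y) := by
  rw [mul_comm (Δ ^ 2), ← div_div, Real.sqrt_div' _ (sq_nonneg Δ), Real.sqrt_sq hΔ.le,
    mul_div_cancel₀ _ hΔ.ne']

theorem inv_div_sq_mul_le_of_calibration {Δ ε K σ B c t : ℝ} (hΔ : 0 < Δ) (hε : 0 < ε)
    (hK0 : 0 ≤ K) (hK : K ≤ 4.5) (hσ : σ = gaussianNoiseStd Δ ε K) (hB : 0 < B) (hc : 0 < c)
    (ht : 0 < t)
    (hcal : 1 / 8 * ((1 + √(36 * √(B * c ^ 2 / (Δ ^ 2 * t)) + 1)) /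
      √(B * c ^ 2 / (Δ ^ 2 * t))) ^ 2 ≤ ε) :
    (c ^ 2 / σ ^ 2)⁻¹ * t ≤ B := by
  have hσle : σ ≤ √(B * c ^ 2 / t) := by
    rw [hσ, ← mul_sqrt_div_sq_mul hΔ]
    exact gaussianNoiseStd_le hΔ.le hε hK0 hK (Real.sqrt_pos.2 (by positivity)) hcal
  rw [Real.le_sqrt (by rw [hσ, gaussianNoiseStd]; positivity) (by positivity),
    le_div_iff₀ ht] at hσle
  rw [inv_div, div_mul_eq_mul_div, div_le_iff₀ (by positivity)]
  linarith

theorem le_inv_add_div_sq_mul_of_calibration {Δ ε K σ a t l c : ℝ} (hΔ : 0 < Δ) (hε : 0 < ε)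
    (hK : 1 ≤ K) (hσ : σ = gaussianNoiseStd Δ ε K) (ha : 0 < a) (hl : 0 < l) (hc : 0 < c)
    (hal : a < t * l) (hcal : ε ≤ 1 / √(a * l * c ^ 2 / (Δ ^ 2 * (t * l - a)))) :
    a ≤ (l⁻¹ + c ^ 2 / σ ^ 2)⁻¹ * t := by
  have hη : 0 < √(a * l * c ^ 2 / (Δ ^ 2 * (t * l - a))) :=
    Real.sqrt_pos.2 (div_pos (by positivity) (mul_pos (by positivity) (sub_pos.2 hal)))
  have hσge : Δ / ε ≤ σ := hσ ▸ div_le_gaussianNoiseStd hΔ.le hε hK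
  have hsqrt : √(a * l * c ^ 2 / (t * l - a)) ≤ σ := by
    rw [← mul_sqrt_div_sq_mul hΔ]
    refine le_trans ?_ hσge
    rw [le_div_iff₀ hε, mul_assoc]
    exact mul_le_of_le_one_right hΔ.le (by rwa [le_div_iff₀ hη, mul_comm] at hcal)
  have hσ0 : 0 < σ := (div_pos hΔ hε).trans_le hσge
  rw [Real.sqrt_le_left hσ0.le, div_le_iff₀ (sub_pos.2 hal)] at hsqrt
  rw [inv_mul_eq_div, le_div_iff₀ (by positivity), mul_add, ← div_eq_mul_inv, mul_div_assoc',
    div_add_div _ _ hl.ne' (by positivity), div_le_iff₀ (by positivity)]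
  nlinarith

theorem privacy_calibration_apriori_general {n : ℕ}
    (A W S : Matrix (Fin n) (Fin n) ℝ)
    (c σ : Fin n → ℝ) (hc : ∀ i, 0 < c i) (hσ : ∀ i, 0 < σ i)
    (hW : W.PosDef) (hS : S.PosDef)
    (hric : S = A * S * Aᵀ -
        A * S * (Matrix.diagonal c)ᵀ *
          (Matrix.diagonal c * S * (Matrix.diagonal c)ᵀ +
            Matrix.diagonal fun i => σ i ^ 2)⁻¹ *
          Matrix.diagonal c * S * Aᵀ + W)
    (Δ ε Kd : Fin n → ℝ) (hΔ : ∀ i, 0 < Δ i) (hε : ∀ i, 0 < ε i)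
    (hKd : ∀ i, 1 ≤ Kd i ∧ Kd i ≤ 4.5)
    (hσdef : ∀ i, σ i = Δ i / (2 * ε i) * (Kd i + Real.sqrt (Kd i ^ 2 + 2 * ε i)))
    (Bl Bu : ℝ) (hBl1 : W.trace < Bl)
    (hBl2 : Bl < W.trace + (Aᵀ * A).trace * ⨅ j, hW.1.eigenvalues j)
    (hBu : W.trace < Bu)
    (u l : Fin n)
    (hu : ∀ i, c i ^ 2 / σ i ^ 2 ≤ c u ^ 2 / σ u ^ 2)
    (hl : ∀ i, c l ^ 2 / σ l ^ 2 ≤ c i ^ 2 / σ i ^ 2)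
    (hcal : ∀ i,
      (1 / 8) * ((1 + Real.sqrt
            (36 * Real.sqrt ((Bu - W.trace) * c l ^ 2 / (Δ i ^ 2 * (Aᵀ * A).trace)) + 1)) /
          Real.sqrt ((Bu - W.trace) * c l ^ 2 / (Δ i ^ 2 * (Aᵀ * A).trace))) ^ 2 ≤ ε i ∧
        ε i ≤ 1 / Real.sqrt ((Bl - W.trace) * (⨅ j, hW.1.eigenvalues j) * c u ^ 2 /
          (Δ i ^ 2 * ((Aᵀ * A).trace * (⨅ j, hW.1.eigenvalues j) - Bl + W.trace)))) :
    Bl ≤ S.trace ∧ S.trace ≤ Bu := by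
  set lam := ⨅ j, hW.1.eigenvalues j
  set E : Matrix (Fin n) (Fin n) ℝ := diagonal fun i => c i ^ 2 / σ i ^ 2
  have hσ2 : ∀ i, 0 < σ i ^ 2 := fun i => pow_pos (hσ i) 2
  have hE : E.PosDef := PosDef.diagonal fun i => div_pos (pow_pos (hc i) 2) (hσ2 i)
  have hform : S = A * (S⁻¹ + E)⁻¹ * Aᵀ + W := by
    simpa only [diagonal_transpose_mul_inv_diagonal_mul c fun i => (hσ2 i).ne'] using
      information_form_of_riccati hS (PosDef.diagonal hσ2) hric
  have htrace : S.trace = (A * (S⁻¹ + E)⁻¹ * Aᵀ).trace + W.trace := by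
    rw [← trace_add, ← hform]
  have htrA : 0 ≤ (Aᵀ * A).trace := by
    simpa using (posSemidef_conjTranspose_mul_self A).trace_nonneg
  have hlam : 0 < lam := pos_of_mul_pos_right (by linarith) htrA
  refine ⟨?_, ?_⟩
  · have hM : 0 ≤ A * (S⁻¹ + E)⁻¹ * Aᵀ :=
      ((hS.inv.add_posSemidef hE.posSemidef).inv.posSemidef.mul_mul_transpose_same A).nonneg
    have hSl : lam • 1 ≤ S := calc
      lam • 1 ≤ W := hW.1.iInf_eigenvalues_smul_one_le
      _ ≤ A * (S⁻¹ + E)⁻¹ * Aᵀ + W := le_add_of_nonneg_left hM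
      _ = S := hform.symm
    have hEu : E ≤ (c u ^ 2 / σ u ^ 2) • 1 := by
      rw [smul_one_eq_diagonal, diagonal_le_diagonal_iff]; exact hu
    linarith [le_trace_mul_inv_inv_add_mul_transpose A hS hE.posSemidef hlam hSl hEu,
      le_inv_add_div_sq_mul_of_calibration (hΔ u) (hε u) (hKd u).1 (hσdef u) (sub_pos.2 hBl1)
        hlam (hc u) (t := (Aᵀ * A).trace) (by linarith) (by rw [← sub_add]; exact (hcal u).2)]
  · have hEl : (c l ^ 2 / σ l ^ 2) • 1 ≤ E := by
      rw [smul_one_eq_diagonal, diagonal_le_diagonal_iff]; exact hl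
    linarith [trace_mul_inv_inv_add_mul_transpose_le A hS (div_pos (pow_pos (hc l) 2) (hσ2 l))
        hEl,
      inv_div_sq_mul_le_of_calibration (hΔ l) (hε l) (by linarith [hKd l]) (hKd l).2 (hσdef l)
        (sub_pos.2 hBu) (hc l) (pos_of_mul_pos_left (by linarith) hlam.le) (hcal l).1]

/-- Privacy calibration for a priori prediction error: if each `εᵢ` lies in
the window `[(1/8)((1+√(36η₂ᵢ+1))/η₂ᵢ)², 1/η₁ᵢ]`, then `B_l ≤ tr Σ ≤ B_u`. -/
theorem privacy_calibration_apriori {n : ℕ} (hn : 1 ≤ n)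
    (A W S : Matrix (Fin n) (Fin n) ℝ)
    (c σ : Fin n → ℝ) (hc : ∀ i, 0 < c i) (hσ : ∀ i, 0 < σ i)
    (hW : W.PosDef) (hS : S.PosDef)
    (hric : S = A * S * Aᵀ -
        A * S * (Matrix.diagonal c)ᵀ *
          (Matrix.diagonal c * S * (Matrix.diagonal c)ᵀ +
            Matrix.diagonal fun i => σ i ^ 2)⁻¹ *
          Matrix.diagonal c * S * Aᵀ + W)
    (Δ ε Kd : Fin n → ℝ) (hΔ : ∀ i, 0 < Δ i) (hε : ∀ i, 0 < ε i)
    (hKd : ∀ i, 1 ≤ Kd i ∧ Kd i ≤ 4.5)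
    (hσdef : ∀ i, σ i = Δ i / (2 * ε i) * (Kd i + Real.sqrt (Kd i ^ 2 + 2 * ε i)))
    (Bl Bu : ℝ) (hBl1 : W.trace < Bl)
    (hBl2 : Bl < W.trace + (Aᵀ * A).trace * ⨅ j, hW.1.eigenvalues j)
    (hBu : W.trace < Bu)
    (u l : Fin n)
    (hu : ∀ i, c i ^ 2 / σ i ^ 2 ≤ c u ^ 2 / σ u ^ 2)
    (hl : ∀ i, c l ^ 2 / σ l ^ 2 ≤ c i ^ 2 / σ i ^ 2)
    (hcal : ∀ i,
      (1 / 8) * ((1 + Real.sqrt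
            (36 * Real.sqrt ((Bu - W.trace) * c l ^ 2 / (Δ i ^ 2 * (Aᵀ * A).trace)) + 1)) /
          Real.sqrt ((Bu - W.trace) * c l ^ 2 / (Δ i ^ 2 * (Aᵀ * A).trace))) ^ 2 ≤ ε i ∧
        ε i ≤ 1 / Real.sqrt ((Bl - W.trace) * (⨅ j, hW.1.eigenvalues j) * c u ^ 2 /
          (Δ i ^ 2 * ((Aᵀ * A).trace * (⨅ j, hW.1.eigenvalues j) - Bl + W.trace)))) :
    Bl ≤ S.trace ∧ S.trace ≤ Bu :=
  privacy_calibration_apriori_general A W S c σ hc hσ hW hS hric Δ ε Kd hΔ hε hKd hσdef Bl Bu hBl1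
    hBl2 hBu u l hu hl hcal
end

section
/- (Performance bound implies information bound) In addition to the stated filtering assumptions, let B ∈ ℝ^{n×m}, let Q ∈ ℝ^{n×n} and R ∈ ℝ^{m×m} be symmetric positive definite, let K ∈ ℝ^{n×n} be symmetric positive semidefinite with K ⪰ Q, let x̄, g ∈ ℝⁿ, H ∈ ℝ^{m×n}, and let W̄ ∈ ℝ^{n×n} be symmetric positive semidefinite. Define the total cost J := tr(KΣ + (Q − K)Σ̄) + x̄ᵀQx̄ − gᵀB(R + BᵀKB)⁻¹Bᵀg + tr(Q W̄) + tr(Hᵀ R H W̄), where Σ̄ := (Cᵀ V⁻¹ C + Σ⁻¹)⁻¹. If J ≤ α for a real number α, then tr(Σ) ≤ (1/λ_min(Q))·( α − x̄ᵀQx̄ + gᵀB(R + BᵀKB)⁻¹Bᵀg − tr(Q W̄) − tr(Hᵀ R H W̄) ). -/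
/-!
The a posteriori covariance `Σ̄ = (CᵀV⁻¹C + Σ⁻¹)⁻¹` satisfies `Σ̄ ⪯ Σ`, and `K ⪰ Q`, so
`tr((K - Q)(Σ - Σ̄)) ≥ 0`, i.e. `tr(KΣ + (Q - K)Σ̄) ≥ tr(QΣ)`. Since `Q ⪰ λ_min(Q) I`, also
`tr(QΣ) ≥ λ_min(Q) tr Σ`. Hence `λ_min(Q) tr Σ` is at most `J` minus its remaining terms.
-/

open Matrix
open scoped MatrixOrder ComplexOrder

namespace Matrix

variable {ι 𝕜 : Type*} [Fintype ι] [DecidableEq ι] [RCLike 𝕜]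

lemma trace_mul_nonneg {P X : Matrix ι ι 𝕜} (hP : 0 ≤ P) (hX : 0 ≤ X) : 0 ≤ (P * X).trace :=
  calc (0 : 𝕜) ≤ (CFC.sqrt X * P * CFC.sqrt X).trace :=
        (conjugate_nonneg_of_nonneg hP (CFC.sqrt_nonneg X)).posSemidef.trace_nonneg
    _ = (P * X).trace := by
        rw [mul_assoc, trace_mul_comm, mul_assoc, CFC.sqrt_mul_sqrt_self X hX]

lemma inv_add_inv_le {D S : Matrix ι ι 𝕜} (hD : 0 ≤ D) (hS : S.PosDef) : (D + S⁻¹)⁻¹ ≤ S := by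
  set T := D + S⁻¹
  have hT : T.PosDef := by simpa only [T, add_comm] using hS.inv.add_posSemidef hD.posSemidef
  have hTdet := (isUnit_iff_isUnit_det T).1 hT.isUnit
  have hSdet := (isUnit_iff_isUnit_det S).1 hS.isUnit
  have hTST : T * S * T - T = D * S * D + D := by
    simp only [T, add_mul, mul_add, nonsing_inv_mul S hSdet, mul_nonsing_inv_cancel_right _ _ hSdet,
      one_mul]
    abel
  have hsub : S - T⁻¹ = T⁻¹ * (D * S * D + D) * T⁻¹ := by
    rw [← hTST]
    simp only [mul_sub, sub_mul, mul_assoc, mul_nonsing_inv _ hTdet, mul_one,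
      nonsing_inv_mul_cancel_left _ _ hTdet]
  rw [← sub_nonneg, hsub]
  exact conjugate_nonneg_of_nonneg
    (add_nonneg (conjugate_nonneg_of_nonneg hS.posSemidef.nonneg hD) hD) hT.inv.posSemidef.nonneg

lemma IsHermitian.iInf_eigenvalues_smul_one_le_s16 {A : Matrix ι ι 𝕜} (hA : A.IsHermitian) :
    (⨅ i, hA.eigenvalues i) • (1 : Matrix ι ι 𝕜) ≤ A := by
  rw [← Algebra.algebraMap_eq_smul_one]
  refine algebraMap_le_of_le_spectrum fun x hx => ?_
  rw [hA.spectrum_real_eq_range_eigenvalues] at hx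
  obtain ⟨i, rfl⟩ := hx
  exact ciInf_le (Set.finite_range _).bddBelow i

lemma PosDef.trace_le_one_div_iInf_eigenvalues_mul_trace_mul {Q S : Matrix ι ι ℝ}
    (hQ : Q.PosDef) (hS : 0 ≤ S) :
    S.trace ≤ (1 / ⨅ i, hQ.1.eigenvalues i) * (Q * S).trace := by
  set μ := ⨅ i, hQ.1.eigenvalues i
  have hμS : μ * S.trace ≤ (Q * S).trace := by
    have := trace_mul_nonneg (sub_nonneg.2 hQ.1.iInf_eigenvalues_smul_one_le_s16) hS
    rwa [sub_mul, trace_sub, smul_mul, one_mul, trace_smul, smul_eq_mul, sub_nonneg] at this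
  cases isEmpty_or_nonempty ι
  · simp [trace_eq_zero_of_isEmpty]
  · obtain ⟨i, hi⟩ := exists_eq_ciInf_of_finite (f := hQ.1.eigenvalues)
    have hμ : 0 < μ := (hQ.eigenvalues_pos i).trans_eq hi
    rwa [one_div_mul_eq_div, le_div_iff₀ hμ, mul_comm]

end Matrix

theorem cost_bound_implies_trace_bound_general {n m : ℕ}
    (S : Matrix (Fin n) (Fin n) ℝ)
    (c σ : Fin n → ℝ) (hσ : ∀ i, 0 < σ i)
    (hS : S.PosDef)
    (B : Matrix (Fin n) (Fin m) ℝ) (Q : Matrix (Fin n) (Fin n) ℝ)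
    (R : Matrix (Fin m) (Fin m) ℝ) (hQ : Q.PosDef)
    (K : Matrix (Fin n) (Fin n) ℝ) (hKQ : (K - Q).PosSemidef)
    (xb g : Fin n → ℝ) (H : Matrix (Fin m) (Fin n) ℝ)
    (Wb : Matrix (Fin n) (Fin n) ℝ) (α : ℝ)
    (hJ : (K * S + (Q - K) *
          (((Matrix.diagonal c)ᵀ * (Matrix.diagonal fun i => σ i ^ 2)⁻¹ *
            Matrix.diagonal c + S⁻¹)⁻¹)).trace +
        xb ⬝ᵥ (Q *ᵥ xb) - g ⬝ᵥ ((B * (R + Bᵀ * K * B)⁻¹ * Bᵀ) *ᵥ g) +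
        (Q * Wb).trace + (Hᵀ * R * H * Wb).trace ≤ α) :
    S.trace ≤ (1 / ⨅ j, hQ.1.eigenvalues j) *
      (α - xb ⬝ᵥ (Q *ᵥ xb) + g ⬝ᵥ ((B * (R + Bᵀ * K * B)⁻¹ * Bᵀ) *ᵥ g) -
        (Q * Wb).trace - (Hᵀ * R * H * Wb).trace) := by
  set Sbar := ((Matrix.diagonal c)ᵀ * (Matrix.diagonal fun i => σ i ^ 2)⁻¹ *
    Matrix.diagonal c + S⁻¹)⁻¹
  have hV : (Matrix.diagonal fun i => σ i ^ 2).PosDef :=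
    posDef_diagonal_iff.mpr fun i => pow_pos (hσ i) 2
  have hSbar : Sbar ≤ S :=
    inv_add_inv_le (hV.inv.posSemidef.conjTranspose_mul_mul_same (diagonal c)).nonneg hS
  have hQS : (Q * S).trace ≤ (K * S + (Q - K) * Sbar).trace := by
    have := trace_mul_nonneg hKQ.nonneg (sub_nonneg.2 hSbar)
    simp only [sub_mul, mul_sub, trace_add, trace_sub] at this ⊢
    linarith
  have hμ : 0 ≤ 1 / ⨅ j, hQ.1.eigenvalues j :=
    one_div_nonneg.2 (Real.iInf_nonneg fun j => (hQ.eigenvalues_pos j).le)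
  calc S.trace ≤ (1 / ⨅ j, hQ.1.eigenvalues j) * (Q * S).trace :=
        hQ.trace_le_one_div_iInf_eigenvalues_mul_trace_mul hS.posSemidef.nonneg
    _ ≤ _ := mul_le_mul_of_nonneg_left (by linarith) hμ

/-- Performance bound implies information bound: if the total private-LQG
cost `J` is at most `α`, then
`tr Σ ≤ (1/λ_min(Q))·(α − x̄ᵀQx̄ + gᵀB(R+BᵀKB)⁻¹Bᵀg − tr(QW̄) − tr(HᵀRHW̄))`. -/
theorem cost_bound_implies_trace_bound {n m : ℕ} (hn : 1 ≤ n)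
    (A W S : Matrix (Fin n) (Fin n) ℝ)
    (c σ : Fin n → ℝ) (hc : ∀ i, 0 < c i) (hσ : ∀ i, 0 < σ i)
    (hW : W.PosDef) (hS : S.PosDef)
    (hric : S = A * S * Aᵀ -
        A * S * (Matrix.diagonal c)ᵀ *
          (Matrix.diagonal c * S * (Matrix.diagonal c)ᵀ +
            Matrix.diagonal fun i => σ i ^ 2)⁻¹ *
          Matrix.diagonal c * S * Aᵀ + W)
    (B : Matrix (Fin n) (Fin m) ℝ) (Q : Matrix (Fin n) (Fin n) ℝ)
    (R : Matrix (Fin m) (Fin m) ℝ) (hQ : Q.PosDef) (hR : R.PosDef)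
    (K : Matrix (Fin n) (Fin n) ℝ) (hK : K.PosSemidef) (hKQ : (K - Q).PosSemidef)
    (xb g : Fin n → ℝ) (H : Matrix (Fin m) (Fin n) ℝ)
    (Wb : Matrix (Fin n) (Fin n) ℝ) (hWb : Wb.PosSemidef) (α : ℝ)
    (hJ : (K * S + (Q - K) *
          (((Matrix.diagonal c)ᵀ * (Matrix.diagonal fun i => σ i ^ 2)⁻¹ *
            Matrix.diagonal c + S⁻¹)⁻¹)).trace +
        xb ⬝ᵥ (Q *ᵥ xb) - g ⬝ᵥ ((B * (R + Bᵀ * K * B)⁻¹ * Bᵀ) *ᵥ g) +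
        (Q * Wb).trace + (Hᵀ * R * H * Wb).trace ≤ α) :
    S.trace ≤ (1 / ⨅ j, hQ.1.eigenvalues j) *
      (α - xb ⬝ᵥ (Q *ᵥ xb) + g ⬝ᵥ ((B * (R + Bᵀ * K * B)⁻¹ * Bᵀ) *ᵥ g) -
        (Q * Wb).trace - (Hᵀ * R * H * Wb).trace) :=
  cost_bound_implies_trace_bound_general S c σ hσ hS B Q R hQ K hKQ xb g H Wb α hJ
end
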